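/- Let H be a symmetric positive definite real n×n matrix and let ℓ : ℝⁿ → ℝ be convex and differentiable with L-Lipschitz gradient, L > 0. Let s > 0, β > 0, let w ∈ ℝⁿ, and set v := w − s·β·H⁻¹∇ℓ(w). Then for every u ∈ ℝⁿ: β·ℓ(u) ≥ β·ℓ(v) − (1/(2s))·‖u − w‖²_H + (1/(2s))·‖u − v‖²_H + (1/(2s))·(1 − s·β·L/λ_min(H))·‖w − v‖²_H. -/

import Mathlib

open scoped RealInnerProductSpace
open Filter Topology

/-- The `H`-inner product `⟨u, v⟩_H = uᵀ H v` on `ℝⁿ`. -/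
noncomputable def hIP {n : ℕ} (H : Matrix (Fin n) (Fin n) ℝ)
    (u v : EuclideanSpace ℝ (Fin n)) : ℝ :=
  ⟪u, Matrix.toEuclideanLin H v⟫

/-- The `H`-norm `‖u‖_H = √(uᵀ H u)` on `ℝⁿ`. -/
noncomputable def hNorm {n : ℕ} (H : Matrix (Fin n) (Fin n) ℝ)
    (u : EuclideanSpace ℝ (Fin n)) : ℝ :=
  Real.sqrt (hIP H u u)

/-- The smallest eigenvalue `λ_min(H)` of a Hermitian matrix `H`. -/
noncomputable def lambdaMin {n : ℕ} (H : Matrix (Fin n) (Fin n) ℝ)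
    (hH : H.IsHermitian) : ℝ :=
  ⨅ i, hH.eigenvalues i

/-!
Convexity bounds `ℓ u` below by the tangent plane at `w`, and the `L`-Lipschitz gradient bounds
`ℓ v` above by the tangent plane plus `(L/2)‖v - w‖²`. Subtracting leaves `β⟪∇ℓ w, u - v⟫`, which
equals `(1/s)⟪u - v, w - v⟫_H` because `H (w - v) = sβ ∇ℓ w`; the three-point identity for `‖·‖_H`
turns it into the three squared `H`-norms, and `λ_min(H) ‖x‖² ≤ ‖x‖²_H` absorbs the smoothness
term into the last one.
-/

section Gradient

variable {E : Type*} [NormedAddCommGroup E] [InnerProductSpace ℝ E] [CompleteSpace E]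
  {f : E → ℝ}

theorem Differentiable.hasDerivAt_apply_add_smul (hf : Differentiable ℝ f) (x d : E) (t : ℝ) :
    HasDerivAt (fun t : ℝ ↦ f (x + t • d)) ⟪gradient f (x + t • d), d⟫ t := by
  have hline : HasDerivAt (fun t : ℝ ↦ x + t • d) d t := by
    simpa using ((hasDerivAt_id t).smul_const d).const_add x
  exact (hf _).hasGradientAt.hasFDerivAt.comp_hasDerivAt t hline

theorem ConvexOn.add_inner_gradient_le (hconv : ConvexOn ℝ Set.univ f)
    (hf : Differentiable ℝ f) (x y : E) : f x + ⟪gradient f x, y - x⟫ ≤ f y := by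
  have hline : ConvexOn ℝ Set.univ (fun t : ℝ ↦ f (x + t • (y - x))) := by
    simpa [Function.comp_def, AffineMap.lineMap_apply, add_comm] using
      hconv.comp_affineMap (AffineMap.lineMap x y)
  have hslope := hline.le_slope_of_hasDerivAt (Set.mem_univ 0) (Set.mem_univ 1) one_pos
    (by simpa only [zero_smul, add_zero] using hf.hasDerivAt_apply_add_smul x (y - x) 0)
  simp only [slope_def_field, one_smul, zero_smul, add_zero, sub_zero, div_one,
    add_sub_cancel] at hslope
  linarith

theorem inner_gradient_add_smul_sub_le {L : ℝ}
    (hLip : ∀ u v, ‖gradient f u - gradient f v‖ ≤ L * ‖u - v‖) (x d : E) {t : ℝ} (ht : 0 ≤ t) :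
    ⟪gradient f (x + t • d), d⟫ - ⟪gradient f x, d⟫ ≤ L * ‖d‖ ^ 2 * t := by
  calc ⟪gradient f (x + t • d), d⟫ - ⟪gradient f x, d⟫
      = ⟪gradient f (x + t • d) - gradient f x, d⟫ := (inner_sub_left ..).symm
    _ ≤ ‖gradient f (x + t • d) - gradient f x‖ * ‖d‖ := real_inner_le_norm _ _
    _ ≤ L * ‖(x + t • d) - x‖ * ‖d‖ := by gcongr; exact hLip _ _
    _ = L * ‖d‖ ^ 2 * t := by
      rw [add_sub_cancel_left, norm_smul, Real.norm_of_nonneg ht]; ring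

theorem apply_le_add_inner_gradient_add_sq (hf : Differentiable ℝ f) {L : ℝ}
    (hLip : ∀ u v, ‖gradient f u - gradient f v‖ ≤ L * ‖u - v‖) (x y : E) :
    f y ≤ f x + ⟪gradient f x, y - x⟫ + L / 2 * ‖y - x‖ ^ 2 := by
  set d := y - x
  -- the gap between `f` and its quadratic upper model along `[x, y]` is antitone
  let ψ : ℝ → ℝ := fun t ↦ f (x + t • d) - t * ⟪gradient f x, d⟫ - L * ‖d‖ ^ 2 * t ^ 2 / 2
  have hψ : ∀ t, HasDerivAt ψ
      (⟪gradient f (x + t • d), d⟫ - ⟪gradient f x, d⟫ - L * ‖d‖ ^ 2 * t) t := fun t ↦ by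
    have := ((hf.hasDerivAt_apply_add_smul x d t).sub ((hasDerivAt_id t).mul_const
      ⟪gradient f x, d⟫)).sub (((hasDerivAt_pow 2 t).const_mul (L * ‖d‖ ^ 2)).div_const 2)
    exact this.congr_deriv (by norm_num; ring)
  have hanti : AntitoneOn ψ (Set.Icc 0 1) :=
    antitoneOn_of_hasDerivWithinAt_nonpos (convex_Icc 0 1)
      (fun t _ ↦ (hψ t).continuousAt.continuousWithinAt) (fun t _ ↦ (hψ t).hasDerivWithinAt)
      (fun t ht ↦ by
        rw [interior_Icc] at ht
        linarith [inner_gradient_add_smul_sub_le hLip x d ht.1.le])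
  have h01 := hanti (Set.left_mem_Icc.2 zero_le_one) (Set.right_mem_Icc.2 zero_le_one) zero_le_one
  simp only [ψ, d, zero_smul, add_zero, one_smul, zero_mul, one_pow, mul_one, sub_zero,
    add_sub_cancel] at h01
  linarith

end Gradient

section HNorm

variable {n : ℕ} {H : Matrix (Fin n) (Fin n) ℝ}

theorem hIP_comm (hH : H.IsHermitian) (u v : EuclideanSpace ℝ (Fin n)) :
    hIP H u v = hIP H v u := by
  rw [hIP, hIP, ← Matrix.isSymmetric_toEuclideanLin_iff.2 hH, real_inner_comm]

theorem hIP_self_nonneg (hH : H.PosSemidef) (u : EuclideanSpace ℝ (Fin n)) : 0 ≤ hIP H u u :=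
  (Matrix.isPositive_toEuclideanLin_iff.2 hH).inner_nonneg_right u

theorem hNorm_sq (hH : H.PosSemidef) (u : EuclideanSpace ℝ (Fin n)) :
    hNorm H u ^ 2 = hIP H u u :=
  Real.sq_sqrt (hIP_self_nonneg hH u)

theorem hNorm_sub_sq (hH : H.PosSemidef) (u v : EuclideanSpace ℝ (Fin n)) :
    hNorm H (u - v) ^ 2 = hNorm H u ^ 2 - 2 * hIP H u v + hNorm H v ^ 2 := by
  have hsymm : ⟪v, Matrix.toEuclideanLin H u⟫ = ⟪u, Matrix.toEuclideanLin H v⟫ :=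
    hIP_comm hH.1 v u
  simp only [hNorm_sq hH, hIP, map_sub, inner_sub_left, inner_sub_right, hsymm]
  ring

theorem hIP_toEuclideanLin_inv (hH : IsUnit H.det) (u g : EuclideanSpace ℝ (Fin n)) :
    hIP H u (Matrix.toEuclideanLin H⁻¹ g) = ⟪u, g⟫ := by
  rw [hIP, ← LinearMap.comp_apply, ← Matrix.toLpLin_mul_same, Matrix.mul_nonsing_inv H hH,
    Matrix.toLpLin_one, LinearMap.id_apply]

theorem posSemidef_sub_lambdaMin_smul_one (hH : H.IsHermitian) :
    (H - lambdaMin H hH • 1).PosSemidef := by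
  refine Matrix.posSemidef_iff_isHermitian_and_spectrum_nonneg.2
    ⟨hH.sub (Matrix.isHermitian_one.smul (IsSelfAdjoint.all _)), ?_⟩
  rw [← Algebra.algebraMap_eq_smul_one, ← spectrum.sub_singleton_eq,
    hH.spectrum_real_eq_range_eigenvalues]
  rintro _ ⟨_, ⟨i, rfl⟩, _, rfl, rfl⟩
  exact sub_nonneg.2 (ciInf_le (Set.finite_range hH.eigenvalues).bddBelow i)

theorem lambdaMin_mul_norm_sq_le_hIP (hH : H.IsHermitian) (u : EuclideanSpace ℝ (Fin n)) :
    lambdaMin H hH * ‖u‖ ^ 2 ≤ hIP H u u := by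
  have := hIP_self_nonneg (posSemidef_sub_lambdaMin_smul_one hH) u
  rwa [hIP, map_sub, map_smul, Matrix.toLpLin_one, LinearMap.sub_apply, LinearMap.smul_apply,
    LinearMap.id_apply, inner_sub_right, real_inner_smul_right, real_inner_self_eq_norm_sq, ← hIP,
    sub_nonneg] at this

theorem lambdaMin_pos [Nonempty (Fin n)] (hH : H.PosDef) : 0 < lambdaMin H hH.1 := by
  obtain ⟨i, hi⟩ := exists_eq_ciInf_of_finite (f := hH.1.eigenvalues)
  rw [lambdaMin, ← hi]
  exact hH.eigenvalues_pos i

theorem norm_sq_le_hNorm_sq_div_lambdaMin (hH : H.PosDef) (u : EuclideanSpace ℝ (Fin n)) :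
    ‖u‖ ^ 2 ≤ hNorm H u ^ 2 / lambdaMin H hH.1 := by
  rcases isEmpty_or_nonempty (Fin n) with _ | _
  -- here `lambdaMin H` is the junk value `⨅` over an empty index type, but `u = 0`
  · simp [Subsingleton.elim u 0, hNorm, hIP]
  · rw [le_div_iff₀' (lambdaMin_pos hH), hNorm_sq hH.posSemidef]
    exact lambdaMin_mul_norm_sq_le_hIP hH.1 u

end HNorm

/-- descent inequality for one preconditioned gradient step
`v = w − s·β·H⁻¹∇ℓ(w)`. -/
theorem stmt_3 {n : ℕ} (H : Matrix (Fin n) (Fin n) ℝ) (hH : H.PosDef)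
    (ℓ : EuclideanSpace ℝ (Fin n) → ℝ)
    (hconv : ConvexOn ℝ Set.univ ℓ) (hdiff : Differentiable ℝ ℓ)
    (L : ℝ) (hL : 0 < L)
    (hLip : ∀ u v, ‖gradient ℓ u - gradient ℓ v‖ ≤ L * ‖u - v‖)
    (s β : ℝ) (hs : 0 < s) (hβ : 0 < β)
    (w v : EuclideanSpace ℝ (Fin n))
    (hv : v = w - (s * β) • Matrix.toEuclideanLin H⁻¹ (gradient ℓ w)) :
    ∀ u, β * ℓ u ≥
        β * ℓ v - (1 / (2 * s)) * hNorm H (u - w) ^ 2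
          + (1 / (2 * s)) * hNorm H (u - v) ^ 2
          + (1 / (2 * s)) * (1 - s * β * L / lambdaMin H hH.1) *
              hNorm H (w - v) ^ 2 := by
  intro u
  set g := gradient ℓ w
  have hIP_step : hIP H (u - v) (w - v) = s * β * ⟪g, u - v⟫ := by
    rw [hv, sub_sub_cancel, hIP, map_smul, real_inner_smul_right, ← hIP,
      hIP_toEuclideanLin_inv ((Matrix.isUnit_iff_isUnit_det H).1 hH.isUnit), real_inner_comm]
  have hthree : 2 * s * β * ⟪g, u - v⟫ =
      hNorm H (u - v) ^ 2 + hNorm H (w - v) ^ 2 - hNorm H (u - w) ^ 2 := by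
    rw [show u - w = (u - v) - (w - v) by abel, hNorm_sub_sq hH.posSemidef (u - v)]
    linarith
  have hcurv : L / 2 * ‖v - w‖ ^ 2 ≤ L / 2 * (hNorm H (w - v) ^ 2 / lambdaMin H hH.1) := by
    rw [norm_sub_rev]
    gcongr
    exact norm_sq_le_hNorm_sq_div_lambdaMin hH _
  have hsplit : ⟪g, u - w⟫ = ⟪g, v - w⟫ + ⟪g, u - v⟫ := by
    rw [← inner_add_right, sub_add_sub_cancel']
  have hlower : ℓ v + ⟪g, u - v⟫ - L / 2 * (hNorm H (w - v) ^ 2 / lambdaMin H hH.1) ≤ ℓ u := by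
    linarith [hconv.add_inner_gradient_le hdiff w u,
      apply_le_add_inner_gradient_add_sq hdiff hLip w v]
  calc _ = β * (ℓ v + ⟪g, u - v⟫ - L / 2 * (hNorm H (w - v) ^ 2 / lambdaMin H hH.1)) := by
        field_simp
        linear_combination -hthree
    _ ≤ β * ℓ u := by gcongr
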